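/- arXiv:1502.03965 — 3 statements merged into one kernel-verified Lean document; each statement's English description precedes it below -/
import Mathlib

section
/- For any treedepth decomposition F of a graph G, there exists a nice treedepth decomposition F* of G whose height does not exceed the height of F, and such that no vertex has greater depth in F* than in F. -/
/-- A rooted forest on the vertex type `V`, given by a parent function.
Acyclicity guarantees that following parents never returns to a vertex. -/
structure RootedForest (V : Type*) where
  parent : V → Option V
  acyclic : ∀ v : V, ¬ Relation.TransGen (fun a b => parent a = some b) v v

namespace RootedForest

variable {V : Type*} (F : RootedForest V)

/-- `F.Anc x y` means that `y` is an ancestor of `x` in the rooted forest `F`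
(every vertex is an ancestor of itself). -/
def Anc (x y : V) : Prop :=
  Relation.ReflTransGen (fun a b => F.parent a = some b) x y

/-- `F.ProperAnc x y` means that `y` is a proper ancestor of `x`. -/
def ProperAnc (x y : V) : Prop :=
  Relation.TransGen (fun a b => F.parent a = some b) x y

/-- `x` and `y` are in ancestor–descendant relation in `F`. -/
def AncDesc (x y : V) : Prop := F.Anc x y ∨ F.Anc y x

/-- The depth of `v` in `F`: the number of vertices on the path from `v`
to the root of its tree (including both endpoints). -/
noncomputable def depth (v : V) : ℕ := Nat.card {u : V // F.Anc v u}

/-- The height of the forest: the maximum depth of a vertex. -/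
noncomputable def height : ℕ := sSup (Set.range F.depth)

/-- The reach of `v` in `F`. -/
noncomputable def reach (v : V) : ℕ := F.height - F.depth v

/-- The vertex set of the subtree of `F` rooted at `v` (all descendants of `v`,
including `v` itself). -/
def subtree (v : V) : Set V := {u : V | F.Anc u v}

/-- `x` and `y` lie in the same tree of the forest, i.e. they have a common ancestor. -/
def SameTree (x y : V) : Prop := ∃ w : V, F.Anc x w ∧ F.Anc y w

end RootedForest

/-- `F` is a treedepth decomposition of `G`: a rooted forest on the vertex set of `G`
such that the endpoints of every edge are in ancestor–descendant relation. -/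
def SimpleGraph.IsTreedepthDecomp {V : Type*} (G : SimpleGraph V) (F : RootedForest V) : Prop :=
  ∀ ⦃u v : V⦄, G.Adj u v → F.AncDesc u v

/-- The treedepth of `G`: the minimum height of a treedepth decomposition of `G`. -/
noncomputable def SimpleGraph.treedepth {V : Type*} (G : SimpleGraph V) : ℕ :=
  sInf {n : ℕ | ∃ F : RootedForest V, G.IsTreedepthDecomp F ∧ F.height = n}

/-- The open neighborhood of a vertex set `S`: all vertices outside `S`
with a neighbor in `S`. -/
def SimpleGraph.nbhdSet {V : Type*} (G : SimpleGraph V) (S : Set V) : Set V :=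
  {u : V | u ∉ S ∧ ∃ s ∈ S, G.Adj u s}

/-- `Z` is a treedepth-`η` modulator of `G`: removing `Z` leaves a graph of
treedepth at most `η`. -/
def SimpleGraph.IsTdMod {V : Type*} (G : SimpleGraph V) (η : ℕ) (Z : Set V) : Prop :=
  (G.induce Zᶜ).treedepth ≤ η

/-- `G` contains `m` pairwise internally vertex-disjoint paths between `u` and `v`. -/
def IntDisjointPaths {V : Type*} (G : SimpleGraph V) (u v : V) (m : ℕ) : Prop :=
  ∃ P : Fin m → G.Walk u v, (∀ i, (P i).IsPath) ∧
    ∀ i j, i ≠ j → ∀ w, w ∈ (P i).support → w ∈ (P j).support → w = u ∨ w = v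

/-- A treedepth decomposition is nice if every subtree induces a connected subgraph. -/
def IsNiceDecomp {V : Type*} (G : SimpleGraph V) (F : RootedForest V) : Prop :=
  ∀ v : V, (G.induce (F.subtree v)).Connected


/-!
Let the new parent of `v` be its deepest proper ancestor `u` in `F` such that `v` is joined
to `u` by a walk inside the subtree `F_u`. The subtree of the new forest at `u` is then
exactly the component of `u` in `G[F_u]`, hence connected. New ancestors are old ancestors,
so no depth grows; and if `w` lies above `v` in `F` and `vw` is an edge, then `v` is joined
to `w` inside `F_w`, so `w` stays an ancestor of `v`.
-/

namespace SimpleGraph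

variable {V : Type*} {G : SimpleGraph V} {s t : Set V} {u v w : V}

variable (G) in
def ReachableIn (s : Set V) (u v : V) : Prop :=
  ∃ p : G.Walk u v, ∀ x ∈ p.support, x ∈ s

lemma reachableIn_refl (hu : u ∈ s) : G.ReachableIn s u u :=
  ⟨.nil, by simpa⟩

lemma Adj.reachableIn (h : G.Adj u v) (hu : u ∈ s) (hv : v ∈ s) : G.ReachableIn s u v :=
  ⟨h.toWalk, by simp [hu, hv]⟩

namespace ReachableIn

lemma mem_right (h : G.ReachableIn s u v) : v ∈ s :=
  let ⟨p, hp⟩ := h; hp v p.end_mem_support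

lemma mono (h : G.ReachableIn s u v) (hst : s ⊆ t) : G.ReachableIn t u v :=
  let ⟨p, hp⟩ := h; ⟨p, fun x hx => hst (hp x hx)⟩

lemma symm (h : G.ReachableIn s u v) : G.ReachableIn s v u :=
  let ⟨p, hp⟩ := h; ⟨p.reverse, fun x hx => hp x (by simpa using hx)⟩

lemma trans (huv : G.ReachableIn s u v) (hvw : G.ReachableIn s v w) : G.ReachableIn s u w := by
  obtain ⟨p, hp⟩ := huv
  obtain ⟨q, hq⟩ := hvw
  refine ⟨p.append q, fun x hx => ?_⟩
  rcases (p.mem_support_append_iff q).mp hx with hx | hx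
  exacts [hp x hx, hq x hx]

end ReachableIn

lemma connected_induce_setOf_reachableIn (hu : u ∈ s) :
    (G.induce {v | G.ReachableIn s u v}).Connected := by
  classical
  refine induce_connected_of_patches u (reachableIn_refl hu) fun {v} ⟨p, hp⟩ => ?_
  refine ⟨{x | x ∈ p.support}, fun x hx => ?_, p.start_mem_support, p.end_mem_support,
    p.connected_induce_support.preconnected _ _⟩
  exact ⟨p.takeUntil x hx, fun y hy => hp y (p.support_takeUntil_subset_support hx hy)⟩

end SimpleGraph

namespace RootedForest

section Basic

variable {V : Type*} {F F' : RootedForest V} {a b c : V}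

lemma anc_refl (F : RootedForest V) (a : V) : F.Anc a a := Relation.ReflTransGen.refl

protected lemma Anc.trans (hab : F.Anc a b) (hbc : F.Anc b c) : F.Anc a c :=
  Relation.ReflTransGen.trans hab hbc

lemma ProperAnc.anc (h : F.ProperAnc a b) : F.Anc a b := h.to_reflTransGen

lemma Anc.properAnc_of_ne (h : F.Anc a b) (hne : a ≠ b) : F.ProperAnc a b :=
  (Relation.reflTransGen_iff_eq_or_transGen.mp h).resolve_left (Ne.symm hne)

lemma ProperAnc.not_anc (h : F.ProperAnc a b) : ¬ F.Anc b a := fun hba =>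
  F.acyclic a (Relation.TransGen.trans_left h hba)

lemma Anc.total (hb : F.Anc a b) (hc : F.Anc a c) : F.Anc b c ∨ F.Anc c b := by
  induction hb using Relation.ReflTransGen.head_induction_on with
  | refl => exact Or.inl hc
  | @head x y hxy _ ih =>
    rcases hc.cases_head with rfl | ⟨z, hxz, hzc⟩
    · exact Or.inr (Relation.ReflTransGen.head hxy ‹_›)
    · exact ih (Option.some.inj (hxy.symm.trans hxz) ▸ hzc)

lemma subtree_subset_subtree (h : F.Anc a b) : F.subtree a ⊆ F.subtree b :=
  fun _ hx => Anc.trans hx h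

lemma depth_eq_ncard (F : RootedForest V) (a : V) : F.depth a = {b | F.Anc a b}.ncard :=
  Nat.card_coe_set_eq _

section Finite

variable [Finite V]

lemma ProperAnc.depth_lt (h : F.ProperAnc a b) : F.depth b < F.depth a := by
  rw [depth_eq_ncard, depth_eq_ncard]
  refine Set.ncard_lt_ncard ⟨fun _ hx => h.anc.trans hx, fun hsub => ?_⟩ (Set.toFinite _)
  exact h.not_anc (hsub (F.anc_refl a))

lemma Anc.anc_of_depth_le (hb : F.Anc a b) (hc : F.Anc a c) (hd : F.depth b ≤ F.depth c) :
    F.Anc c b := by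
  refine (hb.total hc).elim (fun hbc => ?_) id
  obtain rfl | hne := eq_or_ne b c
  · exact F.anc_refl b
  · exact absurd (hbc.properAnc_of_ne hne).depth_lt hd.not_gt

lemma depth_le_depth_of_anc_imp (h : ∀ b, F'.Anc a b → F.Anc a b) :
    F'.depth a ≤ F.depth a := by
  rw [depth_eq_ncard, depth_eq_ncard]
  exact Set.ncard_le_ncard h (Set.toFinite _)

lemma height_le_height_of_depth_le (h : ∀ a, F'.depth a ≤ F.depth a) : F'.height ≤ F.height :=
  csSup_le' <| Set.forall_mem_range.mpr fun a =>
    (h a).trans (le_csSup (Set.finite_range _).bddAbove ⟨a, rfl⟩)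

end Finite

end Basic

section Nice

variable {V : Type*} (G : SimpleGraph V) (F : RootedForest V) {u v w : V}

def subtreeComponent (u : V) : Set V := {w | G.ReachableIn (F.subtree u) u w}

lemma self_mem_subtreeComponent (u : V) : u ∈ F.subtreeComponent G u :=
  SimpleGraph.reachableIn_refl (F.anc_refl u)

variable {G F}

lemma anc_of_mem_subtreeComponent (h : w ∈ F.subtreeComponent G u) : F.Anc w u :=
  SimpleGraph.ReachableIn.mem_right (s := F.subtree u) h

lemma subtreeComponent_subset_of_mem (h : v ∈ F.subtreeComponent G u) :
    F.subtreeComponent G v ⊆ F.subtreeComponent G u :=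
  fun _ hw => SimpleGraph.ReachableIn.trans h
    (hw.mono (subtree_subset_subtree (anc_of_mem_subtreeComponent h)))

lemma mem_subtreeComponent_of_anc (hwu : w ∈ F.subtreeComponent G u)
    (hwv : w ∈ F.subtreeComponent G v) (hvu : F.Anc v u) : v ∈ F.subtreeComponent G u :=
  SimpleGraph.ReachableIn.trans hwu (hwv.mono (subtree_subset_subtree hvu)).symm

variable [Finite V]

variable (G F) in
open Classical in
noncomputable def niceParent (v : V) : Option V :=
  if h : {u | F.ProperAnc v u ∧ v ∈ F.subtreeComponent G u}.Nonempty then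
    some (Set.exists_max_image _ F.depth (Set.toFinite _) h).choose
  else none

lemma niceParent_spec {p : V} (h : F.niceParent G v = some p) :
    F.ProperAnc v p ∧ v ∈ F.subtreeComponent G p := by
  unfold niceParent at h
  split_ifs at h with hne
  exact Option.some.inj h ▸ (Set.exists_max_image _ F.depth (Set.toFinite _) hne).choose_spec.1

lemma exists_niceParent_depth_le (hvu : F.ProperAnc v u) (hu : v ∈ F.subtreeComponent G u) :
    ∃ p, F.niceParent G v = some p ∧ F.depth u ≤ F.depth p := by
  have hne : {u | F.ProperAnc v u ∧ v ∈ F.subtreeComponent G u}.Nonempty := ⟨u, hvu, hu⟩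
  exact ⟨_, dif_pos hne, (Set.exists_max_image _ F.depth (Set.toFinite _) hne).choose_spec.2 u
    ⟨hvu, hu⟩⟩

variable (G F) in
noncomputable def toNice : RootedForest V where
  parent := F.niceParent G
  acyclic v h :=
    F.acyclic v (h.lift' id fun _ _ hab => (niceParent_spec (F := F) (G := G) hab).1)

lemma mem_subtreeComponent_of_anc_toNice (h : (F.toNice G).Anc w u) :
    w ∈ F.subtreeComponent G u := by
  induction h with
  | refl => exact F.self_mem_subtreeComponent G w
  | tail _ hbc ih => exact subtreeComponent_subset_of_mem (niceParent_spec hbc).2 ih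

lemma anc_toNice_of_mem_subtreeComponent (h : w ∈ F.subtreeComponent G u) :
    (F.toNice G).Anc w u := by
  induction hd : F.depth w using Nat.strong_induction_on generalizing w with
  | _ n ih =>
  obtain rfl | hne := eq_or_ne w u
  · exact anc_refl _ w
  have hwu : F.ProperAnc w u := (anc_of_mem_subtreeComponent h).properAnc_of_ne hne
  obtain ⟨p, hp, hup⟩ := exists_niceParent_depth_le hwu h
  obtain ⟨hwp, hwcp⟩ := niceParent_spec hp
  have hpu : p ∈ F.subtreeComponent G u :=
    mem_subtreeComponent_of_anc h hwcp (hwu.anc.anc_of_depth_le hwp.anc hup)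
  exact Relation.ReflTransGen.head hp (ih _ (hd ▸ hwp.depth_lt) hpu rfl)

variable (G F) in
lemma subtree_toNice (u : V) : (F.toNice G).subtree u = F.subtreeComponent G u :=
  Set.ext fun _ => ⟨mem_subtreeComponent_of_anc_toNice, anc_toNice_of_mem_subtreeComponent⟩

variable (G F) in
lemma isNiceDecomp_toNice : IsNiceDecomp G (F.toNice G) := fun u => by
  rw [subtree_toNice]
  exact SimpleGraph.connected_induce_setOf_reachableIn (F.anc_refl u)

lemma isTreedepthDecomp_toNice (hF : G.IsTreedepthDecomp F) :
    G.IsTreedepthDecomp (F.toNice G) := fun v w hvw => by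
  refine (hF hvw).imp (fun h => ?_) (fun h => ?_) <;> apply anc_toNice_of_mem_subtreeComponent
  exacts [hvw.symm.reachableIn (F.anc_refl w) h, hvw.reachableIn (F.anc_refl v) h]

variable (G F) in
lemma depth_toNice_le (v : V) : (F.toNice G).depth v ≤ F.depth v :=
  depth_le_depth_of_anc_imp fun _ h => anc_of_mem_subtreeComponent
    (mem_subtreeComponent_of_anc_toNice h)

end Nice

end RootedForest

/-- For any treedepth decomposition `F` of a graph `G` there is a nice treedepth
decomposition `F'` of `G` whose height does not exceed the height of `F`, and in which
no vertex has greater depth than in `F`. -/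
theorem exists_nice_decomposition {V : Type*} [Fintype V] (G : SimpleGraph V)
    (F : RootedForest V) (hF : G.IsTreedepthDecomp F) :
    ∃ F' : RootedForest V, G.IsTreedepthDecomp F' ∧ IsNiceDecomp G F' ∧
      F'.height ≤ F.height ∧ ∀ v : V, F'.depth v ≤ F.depth v :=
  ⟨F.toNice G, RootedForest.isTreedepthDecomp_toNice hF, F.isNiceDecomp_toNice G,
    RootedForest.height_le_height_of_depth_le (F.depth_toNice_le G), F.depth_toNice_le G⟩
end

section
/- Let d and t be positive integers, let G be a connected graph, and let H_1, H_2, …, H_t be vertex-disjoint connected subgraphs of G with td(H_i) ≥ d for every i ∈ [t]. Let T be a treedepth decomposition of G and let v ∈ V(G) be a vertex with v ∈ N_G(H_i) for every i ∈ [t]. If reach(v, T) < d, then height(T) ≥ t + 1. -/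
/-!
Every `H i` must contain a proper ancestor of `v`. Otherwise `H i`, being connected and
adjacent to `v`, lies entirely below `v`, and `T` restricted to its vertices (each vertex
re-attached to its nearest proper ancestor inside `H i`) is a treedepth decomposition of
`H i` of height at most `reach v < d`. The ancestors found in the disjoint `H i` are
distinct, so together with `v` they give `depth v ≥ t + 1`.
-/

namespace RootedForest

variable {V : Type*} (F : RootedForest V)

lemma anc_total {x a b : V} (ha : F.Anc x a) (hb : F.Anc x b) : F.Anc a b ∨ F.Anc b a :=
  Relation.ReflTransGen.total_of_right_unique
    (fun _ _ _ hb hc => Option.some.inj (hb.symm.trans hc)) ha hb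

lemma eq_or_properAnc_of_anc {a b : V} (h : F.Anc a b) : a = b ∨ F.ProperAnc a b :=
  (Relation.reflTransGen_iff_eq_or_transGen.mp h).imp_left Eq.symm

lemma anc_antisymm {a b : V} (hab : F.Anc a b) (hba : F.Anc b a) : a = b := by
  rcases F.eq_or_properAnc_of_anc hab with rfl | hab'
  · rfl
  rcases F.eq_or_properAnc_of_anc hba with rfl | hba'
  · rfl
  exact absurd (hab'.trans hba') (F.acyclic a)

lemma ne_of_properAnc {a b : V} (h : F.ProperAnc a b) : a ≠ b := by
  rintro rfl
  exact F.acyclic a h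

lemma depth_eq_ncard_s6 (v : V) : F.depth v = {u : V | F.Anc v u}.ncard :=
  Nat.card_coe_set_eq _

section Restrict

variable (S : Set V)

/-- The parent of `x` in the forest induced on `S`: its nearest proper ancestor lying in `S`. -/
noncomputable def restrictParent (x : S) : Option S :=
  open Classical in
  if h : ∃ z : S, F.ProperAnc x z ∧ ∀ w : S, F.ProperAnc x w → F.Anc z w then some h.choose
  else none

variable {F S}

lemma restrictParent_spec {x z : S} (h : F.restrictParent S x = some z) :
    F.ProperAnc x z ∧ ∀ w : S, F.ProperAnc x w → F.Anc z w := by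
  unfold restrictParent at h
  split_ifs at h with hex
  exact Option.some.inj h ▸ hex.choose_spec

lemma properAnc_of_transGen_restrictParent {x y : S}
    (h : Relation.TransGen (fun a b => F.restrictParent S a = some b) x y) :
    F.ProperAnc x y := by
  induction h with
  | single h => exact (restrictParent_spec h).1
  | tail _ h ih => exact ih.trans (restrictParent_spec h).1

variable (F S)

noncomputable def restrict : RootedForest S where
  parent := F.restrictParent S
  acyclic x hx := F.acyclic x (properAnc_of_transGen_restrictParent hx)

variable {F S}

lemma anc_of_restrict_anc {x y : S} (h : (F.restrict S).Anc x y) : F.Anc x y := by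
  rcases Relation.reflTransGen_iff_eq_or_transGen.mp h with rfl | h
  · exact Relation.ReflTransGen.refl
  · exact (properAnc_of_transGen_restrictParent h).to_reflTransGen

end Restrict

variable [Finite V]

lemma depth_lt_of_properAnc {a b : V} (h : F.ProperAnc a b) : F.depth b < F.depth a := by
  rw [depth_eq_ncard_s6, depth_eq_ncard_s6]
  refine Set.ncard_lt_ncard ⟨fun u hu => h.to_reflTransGen.trans hu, fun hsub => ?_⟩
  exact F.ne_of_properAnc h (F.anc_antisymm h.to_reflTransGen (hsub Relation.ReflTransGen.refl))

lemma depth_le_height (v : V) : F.depth v ≤ F.height :=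
  le_csSup (Set.finite_range _).bddAbove ⟨v, rfl⟩

lemma ncard_anc_diff_anc {x v : V} (h : F.Anc x v) :
    ({w | F.Anc x w} \ {w | F.Anc v w}).ncard = F.depth x - F.depth v := by
  have hsub : {w | F.Anc v w} ⊆ {w | F.Anc x w} := fun _ hw => h.trans hw
  rw [Set.ncard_sdiff hsub, ← depth_eq_ncard_s6, ← depth_eq_ncard_s6]

lemma card_add_one_le_depth {ι : Type*} {v : V} {w : ι → V} (hw_inj : Function.Injective w)
    (hw : ∀ i, F.ProperAnc v (w i)) : Nat.card ι + 1 ≤ F.depth v := by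
  have hv : v ∉ Set.range w := by
    rintro ⟨i, rfl⟩
    exact F.ne_of_properAnc (hw i) rfl
  calc Nat.card ι + 1 = (insert v (Set.range w)).ncard := by
        rw [Set.ncard_insert_of_notMem hv, Set.ncard_range_of_injective hw_inj]
    _ ≤ {u | F.Anc v u}.ncard := by
        refine Set.ncard_le_ncard (Set.insert_subset Relation.ReflTransGen.refl ?_)
        rintro _ ⟨i, rfl⟩
        exact (hw i).to_reflTransGen
    _ = F.depth v := (depth_eq_ncard_s6 F v).symm

lemma exists_nearest_properAnc {S : Set V} {x y : S} (h : F.ProperAnc x y) :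
    ∃ z : S, F.ProperAnc x z ∧ ∀ w : S, F.ProperAnc x w → F.Anc z w := by
  obtain ⟨z, hz, hz_max⟩ := Set.exists_max_image {z : S | F.ProperAnc x z}
    (fun z => F.depth z) (Set.toFinite _) ⟨y, h⟩
  refine ⟨z, hz, fun w hw => ?_⟩
  rcases F.anc_total hz.to_reflTransGen hw.to_reflTransGen with hzw | hwz
  · exact hzw
  rcases F.eq_or_properAnc_of_anc hwz with hwz | hwz
  · exact hwz ▸ Relation.ReflTransGen.refl
  · exact absurd (hz_max w hw) (F.depth_lt_of_properAnc hwz).not_ge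

lemma restrict_anc_of_properAnc {S : Set V} {x y : S} (h : F.ProperAnc x y) :
    (F.restrict S).Anc x y := by
  obtain ⟨z, hxz⟩ : ∃ z, F.restrictParent S x = some z := by
    unfold restrictParent
    rw [dif_pos (F.exists_nearest_properAnc h)]
    exact ⟨_, rfl⟩
  obtain ⟨hxz_anc, hz_nearest⟩ := restrictParent_spec hxz
  have := F.depth_lt_of_properAnc hxz_anc
  rcases F.eq_or_properAnc_of_anc (hz_nearest y h) with hzy | hzy
  · exact Relation.ReflTransGen.single (Subtype.ext hzy ▸ hxz)
  · exact Relation.ReflTransGen.head hxz (restrict_anc_of_properAnc hzy)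
termination_by F.depth x

lemma restrict_anc_iff {S : Set V} {x y : S} : (F.restrict S).Anc x y ↔ F.Anc x y := by
  refine ⟨anc_of_restrict_anc, fun h => ?_⟩
  rcases F.eq_or_properAnc_of_anc h with hxy | hxy
  · exact Subtype.ext hxy ▸ Relation.ReflTransGen.refl
  · exact F.restrict_anc_of_properAnc hxy

lemma depth_restrict {S : Set V} (x : S) :
    (F.restrict S).depth x = Nat.card {w : S // F.Anc x w} := by
  simp only [depth, restrict_anc_iff]

lemma height_restrict_le_reach {S : Set V} {v : V} (hS : ∀ s ∈ S, F.Anc s v ∧ ¬ F.Anc v s) :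
    (F.restrict S).height ≤ F.reach v := by
  refine csSup_le' ?_
  rintro _ ⟨x, rfl⟩
  have hinj : Function.Injective fun w : {w : S // F.Anc x w} =>
      (⟨w.1, w.2, (hS _ w.1.2).2⟩ : ↥({w | F.Anc x w} \ {w | F.Anc v w})) :=
    fun a b hab => by simpa [Subtype.ext_iff] using hab
  calc (F.restrict S).depth x ≤ ({w | F.Anc x w} \ {w | F.Anc v w}).ncard := by
        rw [depth_restrict, ← Nat.card_coe_set_eq]
        exact Nat.card_le_card_of_injective _ hinj
    _ = F.depth x - F.depth v := F.ncard_anc_diff_anc (hS x x.2).1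
    _ ≤ F.height - F.depth v := Nat.sub_le_sub_right (F.depth_le_height x) _

end RootedForest

namespace SimpleGraph

variable {V : Type*} {G : SimpleGraph V} {F : RootedForest V}

lemma treedepth_le_height (hF : G.IsTreedepthDecomp F) : G.treedepth ≤ F.height :=
  Nat.sInf_le ⟨F, hF, rfl⟩

namespace IsTreedepthDecomp

lemma restrict [Finite V] (hF : G.IsTreedepthDecomp F) {S : Set V} {G' : SimpleGraph S}
    (hG' : G' ≤ G.induce S) : G'.IsTreedepthDecomp (F.restrict S) := fun _ _ hab =>
  (hF (hG' hab)).imp F.restrict_anc_iff.mpr F.restrict_anc_iff.mpr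

lemma mem_subtree_of_adj (hF : G.IsTreedepthDecomp F) {v a c : V} (hac : G.Adj a c)
    (ha : a ∈ F.subtree v) (hc : ¬ F.Anc v c) : c ∈ F.subtree v := by
  rcases hF hac with hac | hca
  · exact (F.anc_total hac ha).resolve_right hc
  · exact hca.trans ha

lemma verts_subset_subtree (hF : G.IsTreedepthDecomp F) {H : G.Subgraph} (hH : H.Connected)
    {v : V} (hv : ∀ w ∈ H.verts, ¬ F.Anc v w) (hmeet : (H.verts ∩ F.subtree v).Nonempty) :
    H.verts ⊆ F.subtree v := by
  obtain ⟨u, hu, huv⟩ := hmeet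
  intro x hx
  obtain ⟨p⟩ := hH ⟨u, hu⟩ ⟨x, hx⟩
  suffices ∀ {a b : H.verts}, H.coe.Walk a b → ↑a ∈ F.subtree v → ↑b ∈ F.subtree v from
    this p huv
  intro a b p ha
  induction p with
  | nil => exact ha
  | cons hab _ ih =>
    exact ih (hF.mem_subtree_of_adj (H.coe_adj_sub _ _ hab) ha (hv _ (Subtype.prop _)))

/-- `H` hangs below `v`, and `F` restricted to `H` decomposes it. -/
lemma treedepth_le_reach [Finite V] (hF : G.IsTreedepthDecomp F) {H : G.Subgraph}
    (hH : H.Connected) {v : V} (hv : v ∈ G.nbhdSet H.verts) (hno : ∀ w ∈ H.verts, ¬ F.Anc v w) :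
    H.coe.treedepth ≤ F.reach v := by
  obtain ⟨-, u, hu, hvu⟩ := hv
  have hu_sub : u ∈ F.subtree v := hF.mem_subtree_of_adj hvu Relation.ReflTransGen.refl (hno u hu)
  have hsub := hF.verts_subset_subtree hH hno ⟨u, hu, hu_sub⟩
  calc H.coe.treedepth ≤ (F.restrict H.verts).height :=
        treedepth_le_height (hF.restrict fun a b hab => H.coe_adj_sub a b hab)
    _ ≤ F.reach v := F.height_restrict_le_reach fun s hs => ⟨hsub hs, hno s hs⟩

lemma exists_properAnc_mem_of_reach_lt [Finite V] (hF : G.IsTreedepthDecomp F)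
    {H : G.Subgraph} (hH : H.Connected) {v : V} (hv : v ∈ G.nbhdSet H.verts)
    (hreach : F.reach v < H.coe.treedepth) : ∃ w ∈ H.verts, F.ProperAnc v w := by
  by_contra! hno
  refine hreach.not_ge (hF.treedepth_le_reach hH hv fun w hw hvw => ?_)
  rcases F.eq_or_properAnc_of_anc hvw with rfl | hvw
  · exact hv.1 hw
  · exact hno w hw hvw

end IsTreedepthDecomp

end SimpleGraph

theorem height_ge_of_small_reach_general {V : Type*} [Fintype V] (d t : ℕ)
    (G : SimpleGraph V)
    (H : Fin t → G.Subgraph)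
    (hconn : ∀ i, (H i).Connected)
    (hdisj : Pairwise fun i j => Disjoint (H i).verts (H j).verts)
    (htd : ∀ i, d ≤ (H i).coe.treedepth)
    (T : RootedForest V) (hT : G.IsTreedepthDecomp T)
    (v : V) (hv : ∀ i, v ∈ G.nbhdSet (H i).verts)
    (hreach : T.reach v < d) :
    t + 1 ≤ T.height := by
  choose w hwH hw using fun i =>
    hT.exists_properAnc_mem_of_reach_lt (hconn i) (hv i) (hreach.trans_le (htd i))
  have hw_inj : Function.Injective w := fun i j hij => by
    by_contra hne
    exact Set.disjoint_left.mp (hdisj hne) (hwH i) (hij ▸ hwH j)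
  calc t + 1 = Nat.card (Fin t) + 1 := by rw [Nat.card_fin]
    _ ≤ T.depth v := T.card_add_one_le_depth hw_inj hw
    _ ≤ T.height := T.depth_le_height v

/-- Let `G` be a connected graph and `H 0, …, H (t-1)` vertex-disjoint connected
subgraphs of `G`, each of treedepth at least `d`. Let `T` be a treedepth decomposition
of `G` and let `v` be a vertex with `v ∈ N_G(H i)` for every `i`. If the reach of `v`
in `T` is less than `d`, then the height of `T` is at least `t + 1`. -/
theorem height_ge_of_small_reach {V : Type*} [Fintype V] (d t : ℕ) (hd : 1 ≤ d)
    (ht : 1 ≤ t) (G : SimpleGraph V) (hG : G.Connected)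
    (H : Fin t → G.Subgraph)
    (hconn : ∀ i, (H i).Connected)
    (hdisj : Pairwise fun i j => Disjoint (H i).verts (H j).verts)
    (htd : ∀ i, d ≤ (H i).coe.treedepth)
    (T : RootedForest V) (hT : G.IsTreedepthDecomp T)
    (v : V) (hv : ∀ i, v ∈ G.nbhdSet (H i).verts)
    (hreach : T.reach v < d) :
    t + 1 ≤ T.height :=
  height_ge_of_small_reach_general d t G H hconn hdisj htd T hT v hv hreach
end

section
/- Fix an integer d ≥ 3 and positive integers n, k with n = dk, and let 𝒻 be a family of d-element subsets of [n]. Let G' be the graph constructed from ([n], 𝒻, k) as follows: the matrix vertices are M = {v_{i,j} : i ∈ [n], j ∈ [k]}, and for each j ∈ [k] the set {v_{i,j} : i ∈ [n]} induces a clique; for each i ∈ [n] there is a dummy clique D_i of d − 1 vertices, each adjacent to all of {v_{i,j} : j ∈ [k]}; and for each d-element subset X of [n] with X ∉ 𝒻 and each j ∈ [k] there is an enforcer vertex f_{j,X} whose neighborhood is exactly {v_{i,j} : i ∈ X}. Let k' = k(n − d). If there exist k sets in 𝒻 that partition [n], then there exists a set S' ⊆ V(G') of size at most k' such that G' − S'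 contains no K_{d+1} minor, contains no P_{4d} minor, and has treewidth at most d − 1. -/
/-- A tree decomposition of a graph `G`: a tree `tree` together with bags `bag t ⊆ V(G)`
such that every vertex appears in some bag, every edge has both endpoints in some bag,
and for every vertex the set of bags containing it induces a (connected) subtree. -/
structure TreeDecomp {V : Type*} (G : SimpleGraph V) where
  ι : Type
  tree : SimpleGraph ι
  isTree : tree.IsTree
  bag : ι → Set V
  mem_bag : ∀ v : V, ∃ t : ι, v ∈ bag t
  edge_bag : ∀ ⦃u v : V⦄, G.Adj u v → ∃ t : ι, u ∈ bag t ∧ v ∈ bag t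
  conn : ∀ v : V, (tree.induce {t : ι | v ∈ bag t}).Connected

/-- The width of a tree decomposition: the maximum bag size minus one. -/
noncomputable def TreeDecomp.width {V : Type*} {G : SimpleGraph V} (D : TreeDecomp G) : ℕ :=
  sSup (Set.range fun t => Nat.card (D.bag t)) - 1

/-- The treewidth of `G`: the minimum width of a tree decomposition of `G`. -/
noncomputable def SimpleGraph.treewidth {V : Type*} (G : SimpleGraph V) : ℕ :=
  sInf {n : ℕ | ∃ D : TreeDecomp G, D.width = n}


/-- `H` is a minor of `G`: there is a family of nonempty, connected, pairwise disjoint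
branch sets in `G`, one for each vertex of `H`, such that adjacent vertices of `H` have
branch sets joined by an edge of `G`. -/
def SimpleGraph.HasMinor {V W : Type*} (G : SimpleGraph V) (H : SimpleGraph W) : Prop :=
  ∃ φ : W → Set V,
    (∀ w : W, (G.induce (φ w)).Connected) ∧
    (Pairwise fun w₁ w₂ => Disjoint (φ w₁) (φ w₂)) ∧
    (∀ ⦃w₁ w₂ : W⦄, H.Adj w₁ w₂ → ∃ u ∈ φ w₁, ∃ v ∈ φ w₂, G.Adj u v)


/-- Index type for the enforcer vertices: `d`-element subsets of `[n]` not in `𝒻`. -/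
abbrev EnforcerIdx (n d : ℕ) (𝒻 : Finset (Finset (Fin n))) : Type :=
  {X : Finset (Fin n) // X.card = d ∧ X ∉ 𝒻}

/-- The vertex type of the lower-bound construction: matrix vertices `v_{i,j}`,
dummy vertices (`d - 1` per row), and enforcer vertices `f_{j,X}`. -/
abbrev CVert (n k d : ℕ) (𝒻 : Finset (Finset (Fin n))) : Type :=
  (Fin n × Fin k) ⊕ (Fin n × Fin (d - 1)) ⊕ (EnforcerIdx n d 𝒻 × Fin k)

/-- The generating relation for the edges of the construction. -/
def CRel (n k d : ℕ) (𝒻 : Finset (Finset (Fin n))) :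
    CVert n k d 𝒻 → CVert n k d 𝒻 → Prop
  | Sum.inl (_, j), Sum.inl (_, j') => j = j'
  | Sum.inr (Sum.inl (i, _)), Sum.inr (Sum.inl (i', _)) => i = i'
  | Sum.inr (Sum.inl (i, _)), Sum.inl (i', _) => i = i'
  | Sum.inr (Sum.inr (X, j)), Sum.inl (i, j') => j = j' ∧ i ∈ X.1
  | _, _ => False

/-- The graph `G'` of the lower-bound construction: each column of the matrix is a clique;
each dummy clique `D_i` (of `d - 1` vertices) is complete to row `i`; each enforcer vertex
`f_{j,X}` is adjacent exactly to `{v_{i,j} : i ∈ X}`. -/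
def CGraph (n k d : ℕ) (𝒻 : Finset (Finset (Fin n))) : SimpleGraph (CVert n k d 𝒻) :=
  SimpleGraph.fromRel (CRel n k d 𝒻)

/-!
Delete the matrix vertices `v_{i,j}` with `i ∉ X_j`, where `X_1, …, X_k` is the exact cover.
What is left of column `j` is a `d`-clique `C_j`; the dummy clique `D_i` of a row `i ∈ X_j` hangs
off `C_j` at the single vertex `v_{i,j}`, and an enforcer `f_{j,X}` sees fewer than `d` vertices
of `C_j`, since `X ≠ X_j` are both `d`-sets. The bags `C_j`, `D_i ∪ {v_{i,j}}` and
`N[f_{j,X}]`, arranged as a tree of depth two below an empty root, have at most `d` vertices.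

A minor model of a connected graph lives in one such component. In a `K_{d+1}` model some branch
set avoids `C_j`, so it is an enforcer or lies inside some `D_i`; either way it has fewer than `d`
neighbours, yet it must touch the `d` other branch sets. In a `P_{4d}` model at most `d` branch
sets meet `C_j`, every enforcer branch set but the last is followed by one of those, and the
branch sets inside dummy cliques can only form an initial and a final segment, each inside one
`D_i` of at most `d - 1` vertices; this accounts for at most `4d - 1` branch sets.
-/

open Finset SimpleGraph

namespace SimpleGraph

variable {V W : Type*} {G : SimpleGraph V} {H : SimpleGraph W}

structure IsMinorModel (G : SimpleGraph V) (H : SimpleGraph W) (φ : W → Set V) : Prop where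
  connected : ∀ w, (G.induce (φ w)).Connected
  pairwise_disjoint : Pairwise fun w₁ w₂ => Disjoint (φ w₁) (φ w₂)
  exists_adj : ∀ ⦃w₁ w₂⦄, H.Adj w₁ w₂ → ∃ u ∈ φ w₁, ∃ v ∈ φ w₂, G.Adj u v

theorem Connected.induce_image_val {K : Set V} {s : Set K}
    (h : ((G.induce K).induce s).Connected) : (G.induce (Subtype.val '' s)).Connected :=
  h.map ⟨fun x => ⟨x.1.1, x.1, x.2, rfl⟩, id⟩ <| by
    rintro ⟨_, x, hx, rfl⟩
    exact ⟨⟨x, hx⟩, rfl⟩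

theorem HasMinor.exists_isMinorModel_subset {K : Set V} (h : (G.induce K).HasMinor H) :
    ∃ φ, G.IsMinorModel H φ ∧ ∀ w, φ w ⊆ K := by
  obtain ⟨φ, hconn, hdisj, hadj⟩ := h
  refine ⟨fun w => Subtype.val '' φ w, ⟨fun w => (hconn w).induce_image_val, ?_, ?_⟩, ?_⟩
  · exact fun w₁ w₂ hw => (Set.disjoint_image_iff Subtype.val_injective).2 (hdisj hw)
  · intro w₁ w₂ hw
    obtain ⟨u, hu, v, hv, huv⟩ := hadj hw
    exact ⟨u, Set.mem_image_of_mem _ hu, v, Set.mem_image_of_mem _ hv, huv⟩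
  · rintro w _ ⟨x, -, rfl⟩
    exact x.2

theorem Connected.subset_of_adj_mem {B Y : Set V} (hB : (G.induce B).Connected)
    (hY : ∀ u ∈ B, ∀ v ∈ B, G.Adj u v → u ∈ Y → v ∈ Y) {y : V} (hyB : y ∈ B) (hyY : y ∈ Y) :
    B ⊆ Y := by
  have walk_mem : ∀ {a b : B}, (G.induce B).Walk a b → a.1 ∈ Y → b.1 ∈ Y := by
    intro a b p
    induction p with
    | nil => exact id
    | cons h _ ih => exact fun ha => ih (hY _ (Subtype.prop _) _ (Subtype.prop _) h ha)
  intro x hx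
  exact (hB ⟨y, hyB⟩ ⟨x, hx⟩).elim fun p => walk_mem p hyY

namespace IsMinorModel

variable {φ : W → Set V} (hφ : G.IsMinorModel H φ)
include hφ

theorem nonempty (w : W) : (φ w).Nonempty :=
  let ⟨x⟩ := (hφ.connected w).nonempty
  ⟨x.1, x.2⟩

theorem eq_of_mem {w₁ w₂ : W} {v : V} (h₁ : v ∈ φ w₁) (h₂ : v ∈ φ w₂) : w₁ = w₂ := by
  by_contra hne
  exact Set.disjoint_left.1 (hφ.pairwise_disjoint hne) h₁ h₂

theorem card_le_ncard {s : Finset W} {S : Set V} (hs : ∀ w ∈ s, (φ w ∩ S).Nonempty)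
    (hS : S.Finite := by toFinite_tac) : #s ≤ S.ncard := by
  rw [Set.ncard_eq_toFinset_card S hS]
  refine card_le_card_of_forall_subsingleton (fun w v => v ∈ φ w) (fun w hw => ?_) ?_
  · obtain ⟨v, hvφ, hvS⟩ := hs w hw
    exact ⟨v, hS.mem_toFinset.2 hvS, hvφ⟩
  · exact fun v _ w₁ hw₁ w₂ hw₂ => hφ.eq_of_mem hw₁.2 hw₂.2

theorem card_le_ncard_of_adj {K S : Set V} (hK : ∀ w, φ w ⊆ K) {w : W} {s : Finset W}
    (hs : ∀ w' ∈ s, H.Adj w w') (hS : ∀ u ∈ φ w, ∀ v ∈ K, v ∉ φ w → G.Adj u v → v ∈ S)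
    (hSfin : S.Finite := by toFinite_tac) : #s ≤ S.ncard := by
  refine hφ.card_le_ncard (fun w' hw' => ?_) hSfin
  obtain ⟨u, hu, v, hv, huv⟩ := hφ.exists_adj (hs w' hw')
  have hvw : v ∉ φ w := fun h => (hs w' hw').ne (hφ.eq_of_mem h hv)
  exact ⟨v, hv, hS u hu v (hK w' hv) hvw huv⟩

theorem exists_forall_eq (hH : H.Connected) {K : Set V} (hK : ∀ w, φ w ⊆ K) {α : Type*}
    (f : V → α) (hf : ∀ u ∈ K, ∀ v ∈ K, G.Adj u v → f u = f v) :
    ∃ a, ∀ w, ∀ x ∈ φ w, f x = a := by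
  have within : ∀ w, ∀ x ∈ φ w, ∀ y ∈ φ w, f y = f x := fun w x hx =>
    (hφ.connected w).subset_of_adj_mem (Y := {y | f y = f x})
      (fun u hu v hv huv (hux : f u = f x) => (hf v (hK w hv) u (hK w hu) huv.symm).trans hux)
      hx rfl
  have across : ∀ {w w'}, H.Adj w w' → ∀ x ∈ φ w, ∀ y ∈ φ w', f y = f x := by
    intro w w' hww' x hx y hy
    obtain ⟨u, hu, v, hv, huv⟩ := hφ.exists_adj hww'
    rw [within w' v hv y hy, ← hf u (hK w hu) v (hK w' hv) huv, within w x hx u hu]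
  have along : ∀ {w w'} (_ : H.Walk w w'), ∀ x ∈ φ w, ∀ y ∈ φ w', f y = f x := by
    intro w w' p
    induction p with
    | nil => exact within _
    | cons hab _ ih =>
      intro x hx y hy
      obtain ⟨z, hz⟩ := hφ.nonempty _
      exact (ih z hz y hy).trans (across hab x hx z hz)
  obtain ⟨w₀⟩ := hH.nonempty
  obtain ⟨x₀, hx₀⟩ := hφ.nonempty w₀
  exact ⟨f x₀, fun w x hx => (hH w₀ w).elim fun p => along p x₀ hx₀ x hx⟩

end IsMinorModel

theorem forall_le_or_forall_ge_of_pathGraph {m : ℕ} {P B : Fin m → Prop}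
    (hB : ∀ s s', B s → B s' → s = s') (hPB : ∀ s, P s → ¬ B s)
    (hstep : ∀ s s', (pathGraph m).Adj s s' → P s → ¬ B s' → P s') {t : Fin m} (ht : P t) :
    (∀ s ≤ t, P s) ∨ ∀ s, t ≤ s → P s := by
  have down : (∀ s ≤ t, ¬ B s) → ∀ s ≤ t, P s := by
    intro hnB
    suffices ∀ r, ∀ s : Fin m, s.val + r = t.val → P s from
      fun s hs => this (t.val - s.val) s (by rw [Fin.le_def] at hs; omega)
    intro r
    induction r with
    | zero => exact fun s hs => Fin.ext hs ▸ ht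
    | succ r ih =>
      intro s hs
      exact hstep ⟨s + 1, by omega⟩ s (pathGraph_adj.2 (Or.inr rfl)) (ih _ (by simp; omega))
        (hnB s (by rw [Fin.le_def]; omega))
  have up : (∀ s, t ≤ s → ¬ B s) → ∀ s, t ≤ s → P s := by
    intro hnB
    suffices ∀ r, ∀ s : Fin m, t.val + r = s.val → P s from
      fun s hs => this (s.val - t.val) s (by rw [Fin.le_def] at hs; omega)
    intro r
    induction r with
    | zero => exact fun s hs => Fin.ext hs.symm ▸ ht
    | succ r ih =>
      intro s hs
      exact hstep ⟨s - 1, by omega⟩ s (pathGraph_adj.2 (Or.inl (by simp; omega)))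
        (ih _ (by simp; omega)) (hnB s (by rw [Fin.le_def]; omega))
  by_cases hlow : ∀ s ≤ t, ¬ B s
  · exact .inl (down hlow)
  · push Not at hlow
    obtain ⟨p, hpt, hp⟩ := hlow
    refine .inr (up fun s hts hs => ?_)
    obtain rfl := hB s p hs hp
    exact hPB t ht (le_antisymm hpt hts ▸ hp)

theorem isTree_fromRel_of_height {ι : Type*} (f : ι → ι) (h : ι → ℕ) (r : ι)
    (hfix : ∀ u, f u = u ↔ u = r) (hlt : ∀ u, u ≠ r → h (f u) < h u) :
    (fromRel fun u v => f u = v).IsTree := by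
  have adj_parent : ∀ u, u ≠ r → (fromRel fun u v => f u = v).Adj u (f u) := fun u hu =>
    (fromRel_adj _ _ _).2 ⟨fun e => hu ((hfix u).1 e.symm), .inl rfl⟩
  refine ⟨(connected_iff_exists_forall_reachable _).2 ⟨r, fun u => ?_⟩, fun v c hc => ?_⟩
  · induction hn : h u using Nat.strong_induction_on generalizing u with
    | _ n ih =>
      by_cases hu : u = r
      · exact hu ▸ Reachable.refl _
      · exact (ih _ (hn ▸ hlt u hu) (f u) rfl).trans (adj_parent u hu).symm.reachable
  · classical
    obtain ⟨m, hm, hmax⟩ := c.support.toFinset.exists_max_image h ⟨v, by simp⟩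
    rw [List.mem_toFinset] at hm
    set c' := c.rotate m hm
    have hc' : c'.IsCycle := hc.rotate hm
    -- in a cycle through a vertex of maximal height, both cycle neighbours are its parent
    have parent_of_adj : ∀ x ∈ c'.support, (fromRel fun u v => f u = v).Adj m x → x = f m := by
      intro x hx hmx
      obtain ⟨hne, hfm | hfx⟩ := (fromRel_adj _ _ _).1 hmx
      · exact hfm.symm
      · have hxr : x ≠ r := fun hxr => hne (hfx.symm.trans ((hfix x).2 hxr))
        have := hmax x (List.mem_toFinset.2 ((c.mem_support_rotate_iff m hm).1 hx))
        exact absurd (hfx ▸ hlt x hxr) this.not_gt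
    exact hc'.snd_ne_penultimate <|
      (parent_of_adj _ (c'.getVert_mem_support 1) (c'.adj_snd hc'.not_nil)).trans
        (parent_of_adj _ (c'.getVert_mem_support _) (c'.adj_penultimate hc'.not_nil).symm).symm

theorem induce_connected_of_forall_adj {ι : Type*} {T : SimpleGraph ι} {P : Set ι} {c : ι}
    (hc : c ∈ P) (h : ∀ t ∈ P, t ≠ c → T.Adj c t) : (T.induce P).Connected := by
  refine (connected_iff_exists_forall_reachable _).2 ⟨⟨c, hc⟩, fun ⟨t, ht⟩ => ?_⟩
  by_cases htc : t = c
  · subst htc; rfl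
  · exact Adj.reachable (by simpa using h t ht htc)

theorem treewidth_induce_le [Finite V] {K : Set V} {ι : Type} (T : SimpleGraph ι) (hT : T.IsTree)
    (B : ι → Set V) (hmem : ∀ v ∈ K, ∃ t, v ∈ B t)
    (hedge : ∀ u ∈ K, ∀ v ∈ K, G.Adj u v → ∃ t, u ∈ B t ∧ v ∈ B t)
    (hconn : ∀ v ∈ K, (T.induce {t | v ∈ B t}).Connected) {w : ℕ}
    (hw : ∀ t, (B t).ncard ≤ w + 1) : (G.induce K).treewidth ≤ w := by
  let D : TreeDecomp (G.induce K) :=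
    { ι, tree := T, isTree := hT, bag := fun t => Subtype.val ⁻¹' B t
      mem_bag := fun v => hmem v v.2
      edge_bag := fun u v huv => hedge u u.2 v v.2 huv
      conn := fun v => hconn v v.2 }
  have hbag : ∀ t, Nat.card (D.bag t) ≤ w + 1 := fun t =>
    (Nat.card_le_card_of_injective (fun x : D.bag t => (⟨x.1.1, x.2⟩ : B t))
      fun x y hxy => Subtype.ext (Subtype.ext (by simpa using hxy))).trans (hw t)
  have hwidth : D.width ≤ w := Nat.sub_le_of_le_add <|
    csSup_le' (s := Set.range fun t => Nat.card (D.bag t)) (by rintro _ ⟨t, rfl⟩; exact hbag t)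
  exact (Nat.sInf_le (s := {n | ∃ D : TreeDecomp (G.induce K), D.width = n}) ⟨D, rfl⟩).trans hwidth

end SimpleGraph

theorem card_le_card_add_one_of_succ_mem {m : ℕ} {E A : Finset (Fin m)}
    (h : ∀ t ∈ E, ∀ s : Fin m, t.val + 1 = s.val → s ∈ A) : #E ≤ #A + 1 := by
  have hsub : E.image (fun t => t.val + 1) ⊆ insert m (A.image Fin.val) := by
    simp only [subset_iff, mem_image, mem_insert]
    rintro _ ⟨t, ht, rfl⟩
    by_cases hlt : t.val + 1 < m
    · exact .inr ⟨⟨t.val + 1, hlt⟩, h t ht _ rfl, rfl⟩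
    · exact .inl (by omega)
  calc #E = #(E.image fun t => t.val + 1) :=
        (card_image_of_injective _ fun a b hab => Fin.ext (by simpa using hab)).symm
    _ ≤ #(A.image Fin.val) + 1 := (card_le_card hsub).trans (card_insert_le _ _)
    _ ≤ #A + 1 := by gcongr; exact card_image_le

theorem exists_block_mem_of_existsUnique {α : Type*} [Fintype α] {k : ℕ}
    {T : Finset (Finset α)} (hT : #T = k) (hcover : ∀ a, ∃! X, X ∈ T ∧ a ∈ X) :
    ∃ c : α → Fin k, ∀ j, univ.filter (fun a => c a = j) ∈ T := by
  classical
  let e := T.equivFinOfCardEq hT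
  choose X hX hXu using hcover
  refine ⟨fun a => e ⟨X a, (hX a).1⟩, fun j => ?_⟩
  convert (e.symm j).2
  ext a
  rw [mem_filter, ← Equiv.eq_symm_apply]
  refine ⟨fun h => h.2 ▸ (hX a).2, fun h => ⟨mem_univ a, Subtype.ext ?_⟩⟩
  exact (hXu a _ ⟨(e.symm j).2, h⟩).symm

namespace CGraph

variable {n k d : ℕ} {𝒻 : Finset (Finset (Fin n))}

theorem adj_enforcer {X : EnforcerIdx n d 𝒻} {j : Fin k} {v : CVert n k d 𝒻} :
    (CGraph n k d 𝒻).Adj (Sum.inr (Sum.inr (X, j))) v ↔ ∃ i ∈ X.1, v = Sum.inl (i, j) := by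
  rcases v with ⟨i, j'⟩ | ⟨i, a⟩ | ⟨X', j'⟩ <;> simp [CGraph, CRel, eq_comm, and_comm]

theorem adj_dummy {i : Fin n} {a : Fin (d - 1)} {v : CVert n k d 𝒻} :
    (CGraph n k d 𝒻).Adj (Sum.inr (Sum.inl (i, a))) v ↔
      (∃ a', a' ≠ a ∧ v = Sum.inr (Sum.inl (i, a'))) ∨ ∃ j, v = Sum.inl (i, j) := by
  rcases v with ⟨i', j'⟩ | ⟨i', a'⟩ | ⟨X', j'⟩ <;> simp [CGraph, CRel, eq_comm]
  tauto

def block (c : Fin n → Fin k) (j : Fin k) : Finset (Fin n) :=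
  univ.filter fun i => c i = j

/-- The deleted set `S'`: the matrix vertices `v_{i,j}` with `i ∉ X_j`, where `X_j = block c j`. -/
def modulator (c : Fin n → Fin k) : Set (CVert n k d 𝒻) :=
  Sum.inl '' {p | c p.1 ≠ p.2}

def label (c : Fin n → Fin k) : CVert n k d 𝒻 → Fin k
  | Sum.inl (_, j) => j
  | Sum.inr (Sum.inl (i, _)) => c i
  | Sum.inr (Sum.inr (_, j)) => j

def column (c : Fin n → Fin k) (j : Fin k) : Set (CVert n k d 𝒻) :=
  (fun i => Sum.inl (i, j)) '' ↑(block c j)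

def dummies (i : Fin n) : Set (CVert n k d 𝒻) :=
  Set.range fun a => Sum.inr (Sum.inl (i, a))

def enforcerNeighbors (c : Fin n → Fin k) (X : EnforcerIdx n d 𝒻) (j : Fin k) :
    Set (CVert n k d 𝒻) :=
  (fun i => Sum.inl (i, j)) '' ↑(X.1 ∩ block c j)

theorem ncard_column_le (c : Fin n → Fin k) (j : Fin k) :
    (column c j : Set (CVert n k d 𝒻)).ncard ≤ #(block c j) :=
  (Set.ncard_image_le (Set.toFinite _)).trans (Set.ncard_coe_finset _).le

theorem ncard_dummies_le (i : Fin n) : (dummies i : Set (CVert n k d 𝒻)).ncard ≤ d - 1 :=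
  (Set.ncard_range_of_injective fun a b h => by simpa using h).trans_le (by simp)

@[simp]
theorem inr_inl_mem_dummies {i i' : Fin n} {a : Fin (d - 1)} :
    (Sum.inr (Sum.inl (i', a)) : CVert n k d 𝒻) ∈ dummies i ↔ i' = i := by
  simp [dummies, eq_comm]

@[simp]
theorem inl_notMem_dummies {i : Fin n} {p : Fin n × Fin k} :
    (Sum.inl p : CVert n k d 𝒻) ∉ dummies i := by
  simp [dummies]

@[simp]
theorem inr_inr_notMem_dummies {i : Fin n} {p : EnforcerIdx n d 𝒻 × Fin k} :
    (Sum.inr (Sum.inr p) : CVert n k d 𝒻) ∉ dummies i := by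
  simp [dummies]

variable {c : Fin n → Fin k}

@[simp]
theorem inl_mem_modulator {i : Fin n} {j : Fin k} :
    (Sum.inl (i, j) : CVert n k d 𝒻) ∈ modulator c ↔ c i ≠ j := by
  simp [modulator]

@[simp]
theorem inr_notMem_modulator {x} : (Sum.inr x : CVert n k d 𝒻) ∉ modulator c := by
  simp [modulator]

@[simp]
theorem inl_mem_column {i : Fin n} {j j' : Fin k} :
    (Sum.inl (i, j') : CVert n k d 𝒻) ∈ column c j ↔ j' = j ∧ c i = j := by
  simp [column, block, and_comm, eq_comm]

theorem ncard_modulator (hc : ∀ j, #(block c j) = d) :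
    (modulator c : Set (CVert n k d 𝒻)).ncard = k * (n - d) := by
  rw [modulator, Set.ncard_image_of_injective _ Sum.inl_injective,
    Set.ncard_eq_toFinset_card', Set.toFinset_ofPred, card_filter,
    Fintype.sum_prod_type_right]
  simp only [← card_filter]
  have hfiber : ∀ j, #(univ.filter fun i => c i ≠ j) = n - d := fun j => by
    rw [filter_not, card_sdiff_of_subset (subset_univ _), card_univ, Fintype.card_fin, ← hc j,
      block]
  simp [hfiber]

theorem label_eq_of_adj {u v : CVert n k d 𝒻} (hu : u ∈ (modulator c)ᶜ)
    (hv : v ∈ (modulator c)ᶜ) (huv : (CGraph n k d 𝒻).Adj u v) : label c u = label c v := by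
  rcases u with ⟨i, j⟩ | ⟨i, a⟩ | ⟨X, j⟩ <;> rcases v with ⟨i', j'⟩ | ⟨i', a'⟩ | ⟨X', j'⟩ <;>
    simp_all [CGraph, CRel, label] <;> aesop

/-- `X ∉ 𝒻` while the block `X_j` is in `𝒻`, so the `d`-set `X` meets `X_j` in fewer than `d`
points. -/
theorem ncard_enforcerNeighbors_le (hc : ∀ j, #(block c j) = d)
    (h𝒻 : ∀ j, block c j ∈ 𝒻) (X : EnforcerIdx n d 𝒻) (j : Fin k) :
    (enforcerNeighbors c X j).ncard ≤ d - 1 := by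
  have hne : X.1 ∩ block c j ≠ X.1 := fun h => X.2.2 <|
    eq_of_subset_of_card_le (h.symm.subset.trans inter_subset_right) (by rw [hc, X.2.1]) ▸ h𝒻 j
  have hlt := (card_lt_card (inter_subset_left.ssubset_of_ne hne)).trans_eq X.2.1
  exact (Set.ncard_image_le (Set.toFinite _)).trans ((Set.ncard_coe_finset _).trans_le (by omega))

theorem inl_mem_column_label {p : Fin n × Fin k}
    (hp : (Sum.inl p : CVert n k d 𝒻) ∈ (modulator c)ᶜ) :
    (Sum.inl p : CVert n k d 𝒻) ∈ column c (label c (Sum.inl p : CVert n k d 𝒻)) := by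
  obtain ⟨i, j⟩ := p
  simp_all [label]

theorem mem_dummies_or_eq_of_adj {i : Fin n} {u v : CVert n k d 𝒻}
    (hu : u ∈ dummies i) (hv : v ∈ (modulator c)ᶜ) (huv : (CGraph n k d 𝒻).Adj u v) :
    v ∈ dummies i ∨ v = Sum.inl (i, c i) := by
  obtain ⟨a, rfl⟩ := hu
  rcases adj_dummy.1 huv with ⟨a', -, rfl⟩ | ⟨j, rfl⟩
  · simp
  · simp_all

theorem mem_enforcerNeighbors_of_adj {X : EnforcerIdx n d 𝒻} {j : Fin k}
    {v : CVert n k d 𝒻} (hv : v ∈ (modulator c)ᶜ)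
    (h : (CGraph n k d 𝒻).Adj (Sum.inr (Sum.inr (X, j))) v) : v ∈ enforcerNeighbors c X j := by
  obtain ⟨i, hi, rfl⟩ := adj_enforcer.1 h
  simp_all [enforcerNeighbors, block]

section ConnectedSets

variable {B : Set (CVert n k d 𝒻)} (hBK : B ⊆ (modulator c)ᶜ)
  (hB : ((CGraph n k d 𝒻).induce B).Connected)
include hBK hB

/-- The dummy clique `D_i` is attached to the rest of `G' - S'` only at `v_{i, c i}`. -/
theorem subset_dummies {i : Fin n} (hiB : Sum.inl (i, c i) ∉ B) {x : CVert n k d 𝒻}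
    (hxB : x ∈ B) (hx : x ∈ dummies i) : B ⊆ dummies i :=
  hB.subset_of_adj_mem (fun _ _ _ hv huv hu =>
    (mem_dummies_or_eq_of_adj hu (hBK hv) huv).resolve_right fun h => hiB (h ▸ hv)) hxB hx

theorem eq_singleton_or_subset_dummies (hBm : ∀ p, Sum.inl p ∉ B) :
    (∃ X j, B = {Sum.inr (Sum.inr (X, j))}) ∨ ∃ i, B ⊆ dummies i := by
  obtain ⟨⟨x, hx⟩⟩ := hB.nonempty
  rcases x with p | ⟨i, a⟩ | ⟨X, j⟩
  · exact absurd hx (hBm p)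
  · exact .inr ⟨i, subset_dummies hBK hB (hBm _) hx (by simp)⟩
  · refine .inl ⟨X, j, Set.eq_singleton_iff_unique_mem.2 ⟨hx, ?_⟩⟩
    refine hB.subset_of_adj_mem (Y := {Sum.inr (Sum.inr (X, j))}) ?_ hx rfl
    rintro u - v hv huv rfl
    obtain ⟨i, -, rfl⟩ := adj_enforcer.1 huv
    exact absurd hv (hBm _)

theorem exists_ncard_le_forall_adj_mem (hc : ∀ j, #(block c j) = d) (h𝒻 : ∀ j, block c j ∈ 𝒻)
    (hBm : ∀ p, Sum.inl p ∉ B) :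
    ∃ S : Set (CVert n k d 𝒻), S.ncard ≤ d - 1 ∧
      ∀ u ∈ B, ∀ v ∈ (modulator c)ᶜ, v ∉ B → (CGraph n k d 𝒻).Adj u v → v ∈ S := by
  rcases eq_singleton_or_subset_dummies hBK hB hBm with ⟨X, j, rfl⟩ | ⟨i, hBi⟩
  · exact ⟨_, ncard_enforcerNeighbors_le hc h𝒻 X j,
      fun u hu v hv _ huv => mem_enforcerNeighbors_of_adj hv (hu ▸ huv)⟩
  refine ⟨insert (Sum.inl (i, c i)) (dummies i \ B), ?_, fun u hu v hv hvB huv => ?_⟩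
  · have hBpos : 0 < B.ncard :=
      (Set.ncard_pos (Set.toFinite _)).2 (Set.nonempty_coe_sort.1 hB.nonempty)
    have := ncard_dummies_le (k := k) (d := d) (𝒻 := 𝒻) i
    have := Set.ncard_le_ncard hBi
    calc _ ≤ (dummies i \ B).ncard + 1 := Set.ncard_insert_le _ _
      _ = (dummies i).ncard - B.ncard + 1 := by rw [Set.ncard_sdiff hBi]
      _ ≤ d - 1 := by omega
  · rcases mem_dummies_or_eq_of_adj (hBi hu) hv huv with h | h
    · exact .inr ⟨h, hvB⟩
    · exact .inl h

end ConnectedSets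

theorem inl_notMem_of_label {B : Set (CVert n k d 𝒻)} (hBK : B ⊆ (modulator c)ᶜ) {j : Fin k}
    (hlabel : ∀ x ∈ B, label c x = j) (hcol : ∀ x ∈ B, x ∉ column c j) (p : Fin n × Fin k) :
    Sum.inl p ∉ B := fun hp =>
  hcol _ hp (hlabel _ hp ▸ inl_mem_column_label (hBK hp))

theorem not_hasMinor_top (hd : 0 < d) (hc : ∀ j, #(block c j) = d) (h𝒻 : ∀ j, block c j ∈ 𝒻) :
    ¬ ((CGraph n k d 𝒻).induce (modulator c)ᶜ).HasMinor (⊤ : SimpleGraph (Fin (d + 1))) := by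
  intro h
  obtain ⟨φ, hφ, hK⟩ := h.exists_isMinorModel_subset
  obtain ⟨j, hj⟩ := hφ.exists_forall_eq connected_top hK (label c)
    fun _ hu _ hv => label_eq_of_adj hu hv
  obtain ⟨w₀, hw₀⟩ : ∃ w₀, ∀ x ∈ φ w₀, x ∉ column c j := by
    by_contra! hall
    have hcard := hφ.card_le_ncard (s := univ) fun w _ => hall w
    rw [card_univ, Fintype.card_fin] at hcard
    have := (ncard_column_le (d := d) (𝒻 := 𝒻) c j).trans_eq (hc j)
    omega
  obtain ⟨S, hS, hSadj⟩ := exists_ncard_le_forall_adj_mem (hK w₀) (hφ.connected w₀) hc h𝒻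
    (inl_notMem_of_label (hK w₀) (hj w₀) hw₀)
  have := hφ.card_le_ncard_of_adj hK (s := univ.erase w₀)
    (fun _ hw => (top_adj _ _).2 (ne_of_mem_erase hw).symm) hSadj
  rw [card_erase_of_mem (mem_univ _), card_univ, Fintype.card_fin] at this
  omega

open Classical in
theorem card_filter_subset_dummies_le {W : Type*} [Fintype W] {G : SimpleGraph (CVert n k d 𝒻)}
    {H : SimpleGraph W} {φ : W → Set (CVert n k d 𝒻)} (hφ : G.IsMinorModel H φ)
    (x : CVert n k d 𝒻) : #(univ.filter fun w => ∃ i, x ∈ dummies i ∧ φ w ⊆ dummies i) ≤ d - 1 := by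
  rcases x with p | ⟨i₀, a⟩ | q
  · simp
  · refine (hφ.card_le_ncard fun w hw => ?_).trans (ncard_dummies_le i₀)
    obtain ⟨i, hi, hw⟩ := (mem_filter.1 hw).2
    obtain ⟨y, hy⟩ := hφ.nonempty w
    exact ⟨y, hy, (inr_inl_mem_dummies.1 hi) ▸ hw hy⟩
  · simp

section PathGraph

variable {m : ℕ} {φ : Fin m → Set (CVert n k d 𝒻)}
  (hφ : (CGraph n k d 𝒻).IsMinorModel (pathGraph m) φ) (hK : ∀ t, φ t ⊆ (modulator c)ᶜ)
include hφ hK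

theorem subset_dummies_of_pathGraph {i : Fin n} {t : Fin m} (ht : φ t ⊆ dummies i) :
    (∀ s ≤ t, φ s ⊆ dummies i) ∨ ∀ s, t ≤ s → φ s ⊆ dummies i := by
  refine forall_le_or_forall_ge_of_pathGraph (B := fun s => Sum.inl (i, c i) ∈ φ s)
    (fun s s' hs hs' => hφ.eq_of_mem hs hs') (fun s hs hB => by simpa using hs hB)
    (fun s s' hss' hs hs' => ?_) ht
  obtain ⟨u, hu, v, hv, huv⟩ := hφ.exists_adj hss'
  have hvi := (mem_dummies_or_eq_of_adj (hs hu) (hK s' hv) huv).resolve_right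
    fun h => hs' (h ▸ hv)
  exact subset_dummies (hK s') (hφ.connected s') hs' hv hvi

open Classical in
theorem card_filter_subset_dummies_le_of_pathGraph (hm : 0 < m) :
    #(univ.filter fun t => ∃ i, φ t ⊆ dummies i) ≤ 2 * (d - 1) := by
  obtain ⟨x₀, hx₀⟩ := hφ.nonempty ⟨0, hm⟩
  obtain ⟨x₁, hx₁⟩ := hφ.nonempty ⟨m - 1, by omega⟩
  have hsub : (univ.filter fun t => ∃ i, φ t ⊆ dummies i) ⊆
      (univ.filter fun t => ∃ i, x₀ ∈ dummies i ∧ φ t ⊆ dummies i) ∪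
        (univ.filter fun t => ∃ i, x₁ ∈ dummies i ∧ φ t ⊆ dummies i) := by
    intro t ht
    obtain ⟨i, hi⟩ := (mem_filter.1 ht).2
    rcases subset_dummies_of_pathGraph hφ hK hi with h | h
    · exact mem_union_left _ (mem_filter.2 ⟨mem_univ _, i, h _ (Fin.le_def.2 (by simp)) hx₀, hi⟩)
    · exact mem_union_right _
        (mem_filter.2 ⟨mem_univ _, i, h _ (Fin.le_def.2 (by simp; omega)) hx₁, hi⟩)
  have h₀ := card_filter_subset_dummies_le hφ x₀
  have h₁ := card_filter_subset_dummies_le hφ x₁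
  calc _ ≤ _ := card_le_card hsub
    _ ≤ _ := card_union_le _ _
    _ ≤ 2 * (d - 1) := (add_le_add h₀ h₁).trans (by omega)

end PathGraph

theorem not_hasMinor_pathGraph (hd : 0 < d) (hc : ∀ j, #(block c j) = d) :
    ¬ ((CGraph n k d 𝒻).induce (modulator c)ᶜ).HasMinor (pathGraph (4 * d)) := by
  classical
  intro h
  obtain ⟨φ, hφ, hK⟩ := h.exists_isMinorModel_subset
  have hm : 0 < 4 * d := by omega
  have hconn : (pathGraph (4 * d)).Connected :=
    (connected_iff _).2 ⟨pathGraph_preconnected _, ⟨⟨0, hm⟩⟩⟩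
  obtain ⟨j, hj⟩ := hφ.exists_forall_eq hconn hK (label c) fun _ hu _ hv => label_eq_of_adj hu hv
  let A := univ.filter fun t => (φ t ∩ column c j).Nonempty
  let E := univ.filter fun t => ∃ X j', φ t = {Sum.inr (Sum.inr (X, j'))}
  let R := univ.filter fun t => ∃ i, φ t ⊆ dummies i
  have hA : #A ≤ d :=
    (hφ.card_le_ncard fun t ht => (mem_filter.1 ht).2).trans ((ncard_column_le c j).trans_eq (hc j))
  have hE : #E ≤ #A + 1 := card_le_card_add_one_of_succ_mem fun t ht s hts => by
    obtain ⟨X, j', hX⟩ := (mem_filter.1 ht).2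
    obtain ⟨u, hu, v, hv, huv⟩ := hφ.exists_adj (pathGraph_adj.2 (.inl hts))
    rw [hX, Set.mem_singleton_iff] at hu
    subst hu
    obtain ⟨i, -, rfl⟩ := adj_enforcer.1 huv
    exact mem_filter.2 ⟨mem_univ _, _, hv, hj s _ hv ▸ inl_mem_column_label (hK s hv)⟩
  have hR : #R ≤ 2 * (d - 1) := card_filter_subset_dummies_le_of_pathGraph hφ hK hm
  have hcover : (univ : Finset (Fin (4 * d))) ⊆ A ∪ E ∪ R := by
    intro t _
    by_cases htA : (φ t ∩ column c j).Nonempty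
    · simp [A, htA]
    rcases eq_singleton_or_subset_dummies (hK t) (hφ.connected t)
      (inl_notMem_of_label (hK t) (hj t) fun x hx hxc => htA ⟨x, hx, hxc⟩) with h | h
    · exact mem_union_left _ (mem_union_right _ (mem_filter.2 ⟨mem_univ _, h⟩))
    · exact mem_union_right _ (mem_filter.2 ⟨mem_univ _, h⟩)
  have hcount := (card_le_card hcover).trans <|
    (card_union_le _ _).trans (Nat.add_le_add_right (card_union_le A E) _)
  rw [card_univ, Fintype.card_fin] at hcount
  omega

abbrev Node (n k d : ℕ) (𝒻 : Finset (Finset (Fin n))) : Type :=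
  Option (Fin k ⊕ Fin n ⊕ (EnforcerIdx n d 𝒻 × Fin k))

def parent (c : Fin n → Fin k) : Node n k d 𝒻 → Node n k d 𝒻
  | none => none
  | some (Sum.inl _) => none
  | some (Sum.inr (Sum.inl i)) => some (Sum.inl (c i))
  | some (Sum.inr (Sum.inr (_, j))) => some (Sum.inl j)

def depth : Node n k d 𝒻 → ℕ
  | none => 0
  | some (Sum.inl _) => 1
  | some (Sum.inr _) => 2

def bag (c : Fin n → Fin k) : Node n k d 𝒻 → Set (CVert n k d 𝒻)
  | none => ∅
  | some (Sum.inl j) => column c j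
  | some (Sum.inr (Sum.inl i)) => insert (Sum.inl (i, c i)) (dummies i)
  | some (Sum.inr (Sum.inr (X, j))) => insert (Sum.inr (Sum.inr (X, j))) (enforcerNeighbors c X j)

/-- The node whose bag contains `v` and whose children are the other nodes with `v` in the bag. -/
def home : CVert n k d 𝒻 → Node n k d 𝒻
  | Sum.inl (_, j) => some (Sum.inl j)
  | Sum.inr (Sum.inl (i, _)) => some (Sum.inr (Sum.inl i))
  | Sum.inr (Sum.inr (X, j)) => some (Sum.inr (Sum.inr (X, j)))

theorem isTree_parent (c : Fin n → Fin k) :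
    (fromRel fun u v : Node n k d 𝒻 => parent c u = v).IsTree :=
  isTree_fromRel_of_height _ depth none (by rintro (_ | _ | _ | _) <;> simp [parent])
    (by rintro (_ | _ | _ | _) <;> simp [parent, depth])

theorem mem_bag_home {v : CVert n k d 𝒻} (hv : v ∈ (modulator c)ᶜ) : v ∈ bag c (home v) := by
  rcases v with ⟨i, j⟩ | ⟨i, a⟩ | ⟨X, j⟩ <;> simp_all [bag, home, dummies]

theorem eq_home_or_parent_eq_home {v : CVert n k d 𝒻} {t : Node n k d 𝒻} (hv : v ∈ bag c t) :
    t = home v ∨ parent c t = home v := by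
  rcases t with _ | j | i | ⟨X, j⟩ <;> rcases v with ⟨i', j'⟩ | ⟨i', a⟩ | ⟨X', j'⟩ <;>
    simp_all [bag, home, parent, column, dummies, enforcerNeighbors, block]

theorem exists_mem_bag_of_adj {u v : CVert n k d 𝒻} (hu : u ∈ (modulator c)ᶜ)
    (hv : v ∈ (modulator c)ᶜ) (huv : (CGraph n k d 𝒻).Adj u v) :
    ∃ t, u ∈ bag c t ∧ v ∈ bag c t := by
  suffices v ∈ bag c (home u) ∨ u ∈ bag c (home v) from this.elim
    (fun h => ⟨_, mem_bag_home hu, h⟩) (fun h => ⟨_, h, mem_bag_home hv⟩)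
  rcases u with ⟨i, j⟩ | ⟨i, a⟩ | ⟨X, j⟩ <;> rcases v with ⟨i', j'⟩ | ⟨i', a'⟩ | ⟨X', j'⟩ <;>
    simp_all [CGraph, CRel, bag, home, column, dummies, enforcerNeighbors, block]
  all_goals omega

theorem ncard_bag_le (hd : 0 < d) (hc : ∀ j, #(block c j) = d) (h𝒻 : ∀ j, block c j ∈ 𝒻)
    (t : Node n k d 𝒻) : (bag c t).ncard ≤ d := by
  rcases t with _ | j | i | ⟨X, j⟩
  · simp [bag]
  · exact (ncard_column_le c j).trans_eq (hc j)
  · have := ncard_dummies_le (k := k) (d := d) (𝒻 := 𝒻) i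
    exact (Set.ncard_insert_le _ _).trans (by omega)
  · have := ncard_enforcerNeighbors_le hc h𝒻 X j
    exact (Set.ncard_insert_le _ _).trans (by omega)

theorem treewidth_le (hd : 0 < d) (hc : ∀ j, #(block c j) = d) (h𝒻 : ∀ j, block c j ∈ 𝒻) :
    ((CGraph n k d 𝒻).induce (modulator c)ᶜ).treewidth ≤ d - 1 :=
  treewidth_induce_le _ (isTree_parent c) (bag c) (fun _ hv => ⟨_, mem_bag_home hv⟩)
    (fun _ hu _ hv => exists_mem_bag_of_adj hu hv)
    (fun _ hv => induce_connected_of_forall_adj (mem_bag_home hv) fun _ ht hne =>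
      (fromRel_adj _ _ _).2 ⟨Ne.symm hne, .inr ((eq_home_or_parent_eq_home ht).resolve_left hne)⟩)
    fun t => (ncard_bag_le hd hc h𝒻 t).trans (by omega)

end CGraph

open CGraph

theorem exact_cover_to_modulator_general (d n k : ℕ) (hd : 3 ≤ d)
    (𝒻 : Finset (Finset (Fin n)))
    (hcard : ∀ X ∈ 𝒻, X.card = d)
    (T : Finset (Finset (Fin n))) (hT : T ⊆ 𝒻) (hTcard : T.card = k)
    (hcover : ∀ i : Fin n, ∃! X : Finset (Fin n), X ∈ T ∧ i ∈ X) :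
    ∃ S' : Set (CVert n k d 𝒻), S'.ncard ≤ k * (n - d) ∧
      ¬ ((CGraph n k d 𝒻).induce (S'ᶜ : Set (CVert n k d 𝒻))).HasMinor
        (⊤ : SimpleGraph (Fin (d + 1))) ∧
      ¬ ((CGraph n k d 𝒻).induce (S'ᶜ : Set (CVert n k d 𝒻))).HasMinor
        (SimpleGraph.pathGraph (4 * d)) ∧
      ((CGraph n k d 𝒻).induce (S'ᶜ : Set (CVert n k d 𝒻))).treewidth ≤ d - 1 := by
  obtain ⟨c, hcT⟩ := exists_block_mem_of_existsUnique hTcard hcover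
  have h𝒻 : ∀ j, block c j ∈ 𝒻 := fun j => hT (hcT j)
  have hc : ∀ j, #(block c j) = d := fun j => hcard _ (h𝒻 j)
  have hd₀ : 0 < d := by omega
  exact ⟨modulator c, (ncard_modulator hc).le, not_hasMinor_top hd₀ hc h𝒻,
    not_hasMinor_pathGraph hd₀ hc, treewidth_le hd₀ hc h𝒻⟩

/-- If there is an exact cover of `[n]` by `k` sets from `𝒻`, then at most `k(n-d)`
vertices can be deleted from the constructed graph `G'` so that the remaining graph is
`K_{d+1}`-minor-free, `P_{4d}`-minor-free, and has treewidth at most `d - 1`. -/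
theorem exact_cover_to_modulator (d n k : ℕ) (hd : 3 ≤ d) (hk : 1 ≤ k)
    (hn : n = d * k) (𝒻 : Finset (Finset (Fin n)))
    (hcard : ∀ X ∈ 𝒻, X.card = d)
    (T : Finset (Finset (Fin n))) (hT : T ⊆ 𝒻) (hTcard : T.card = k)
    (hcover : ∀ i : Fin n, ∃! X : Finset (Fin n), X ∈ T ∧ i ∈ X) :
    ∃ S' : Set (CVert n k d 𝒻), S'.ncard ≤ k * (n - d) ∧
      ¬ ((CGraph n k d 𝒻).induce (S'ᶜ : Set (CVert n k d 𝒻))).HasMinor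
        (⊤ : SimpleGraph (Fin (d + 1))) ∧
      ¬ ((CGraph n k d 𝒻).induce (S'ᶜ : Set (CVert n k d 𝒻))).HasMinor
        (SimpleGraph.pathGraph (4 * d)) ∧
      ((CGraph n k d 𝒻).induce (S'ᶜ : Set (CVert n k d 𝒻))).treewidth ≤ d - 1 :=
  exact_cover_to_modulator_general d n k hd 𝒻 hcard T hT hTcard hcover
end
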